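/- An irreducible surface in projective space that contains a two-parameter family of lines is a linear 2-plane. -/

import Mathlib

open MvPolynomial

/-- A linear functional is realized by a polynomial. -/
lemma aux_linpoly {m : ℕ} (φ : Module.Dual ℂ (Fin m → ℂ)) :
    ∃ P : MvPolynomial (Fin m) ℂ, ∀ y : Fin m → ℂ, MvPolynomial.eval y P = φ y := by
  refine ⟨∑ i, MvPolynomial.C (φ (Pi.single i 1)) * MvPolynomial.X i, fun y => ?_⟩
  have hy : y = ∑ i, y i • Pi.basisFun ℂ (Fin m) i := by
    have := (Pi.basisFun ℂ (Fin m)).sum_repr y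
    simpa using this.symm
  conv_rhs => rw [hy]
  rw [map_sum, map_sum]
  congr 1; ext i
  simp [mul_comm]

/-- Separating a point from a subspace by a polynomial vanishing on the subspace. -/
lemma aux_sep {m : ℕ} (W : Submodule ℂ (Fin m → ℂ)) {w : Fin m → ℂ} (hw : w ∉ W) :
    ∃ P : MvPolynomial (Fin m) ℂ,
      (∀ z ∈ W, MvPolynomial.eval z P = 0) ∧ MvPolynomial.eval w P ≠ 0 := by
  have hmk : W.mkQ w ≠ 0 := by
    rw [Submodule.mkQ_apply, Ne, Submodule.Quotient.mk_eq_zero]; exact hw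
  have := (Module.forall_dual_apply_eq_zero_iff ℂ (W.mkQ w)).not.2 hmk
  push_neg at this
  obtain ⟨ψ, hψ⟩ := this
  obtain ⟨P, hP⟩ := aux_linpoly (ψ.comp W.mkQ)
  refine ⟨P, fun z hz => ?_, ?_⟩
  · rw [hP]
    simp [Submodule.mkQ_apply, (Submodule.Quotient.mk_eq_zero W).2 hz]
  · rw [hP]; exact hψ

lemma aux_zl_vid {m : ℕ} (W : Submodule ℂ (Fin m → ℂ)) :
    MvPolynomial.zeroLocus ℂ (MvPolynomial.vanishingIdeal ℂ (W : Set (Fin m → ℂ)))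
      = (W : Set (Fin m → ℂ)) := by
  refine le_antisymm ?_ (MvPolynomial.zeroLocus_vanishingIdeal_le _)
  intro y hy
  by_contra hyW
  obtain ⟨P, hP0, hPy⟩ := aux_sep W hyW
  exact hPy (hy P (by rwa [mem_vanishingIdeal_iff]))

lemma aux_vid_lt {m : ℕ} {W₁ W₂ : Submodule ℂ (Fin m → ℂ)} (h : W₁ < W₂) :
    MvPolynomial.vanishingIdeal ℂ (W₂ : Set (Fin m → ℂ))
      < MvPolynomial.vanishingIdeal ℂ (W₁ : Set (Fin m → ℂ)) := by
  refine lt_of_le_of_ne (MvPolynomial.vanishingIdeal_anti_mono ?_) ?_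
  · exact SetLike.coe_subset_coe.2 h.le
  · intro he
    have := congrArg (MvPolynomial.zeroLocus ℂ) he
    rw [aux_zl_vid, aux_zl_vid] at this
    exact h.ne (SetLike.ext' this.symm)

/-- Evaluating a polynomial along a parametrized line. -/
lemma aux_line_eval {m : ℕ} (a b : Fin m → ℂ) (t : ℂ) (f : MvPolynomial (Fin m) ℂ) :
    Polynomial.eval t (MvPolynomial.eval₂ Polynomial.C
        (fun i => Polynomial.C (a i) + Polynomial.X * Polynomial.C (b i - a i)) f)
      = MvPolynomial.eval (a + t • (b - a)) f := by
  have : (Polynomial.evalRingHom t).comp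
      (MvPolynomial.eval₂Hom (Polynomial.C : ℂ →+* Polynomial ℂ)
        (fun i => Polynomial.C (a i) + Polynomial.X * Polynomial.C (b i - a i)))
      = MvPolynomial.eval (a + t • (b - a)) := by
    apply MvPolynomial.ringHom_ext <;> intro i <;> simp [mul_comm]
  have h2 : Polynomial.eval t (MvPolynomial.eval₂ Polynomial.C
      (fun i => Polynomial.C (a i) + Polynomial.X * Polynomial.C (b i - a i)) f)
      = ((Polynomial.evalRingHom t).comp
        (MvPolynomial.eval₂Hom (Polynomial.C : ℂ →+* Polynomial ℂ)
          (fun i => Polynomial.C (a i) + Polynomial.X * Polynomial.C (b i - a i)))) f := rfl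
  rw [h2, this]

/-- The vanishing ideal of a linear subspace is prime. -/
lemma aux_vid_prime {m : ℕ} (W : Submodule ℂ (Fin m → ℂ)) :
    (MvPolynomial.vanishingIdeal ℂ (W : Set (Fin m → ℂ))).IsPrime := by
  constructor
  · intro htop
    have h1 : (1 : MvPolynomial (Fin m) ℂ) ∈
        MvPolynomial.vanishingIdeal ℂ (W : Set (Fin m → ℂ)) := htop ▸ Submodule.mem_top
    have := (mem_vanishingIdeal_iff).1 h1 0 W.zero_mem
    simp at this
  · intro f g hfg
    by_contra hor
    push_neg at hor
    obtain ⟨hf, hg⟩ := hor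
    rw [mem_vanishingIdeal_iff] at hf hg
    push_neg at hf hg
    obtain ⟨a, ha, haf⟩ := hf
    obtain ⟨b, hb, hbg⟩ := hg
    have hline : ∀ t : ℂ, a + t • (b - a) ∈ W := fun t =>
      W.add_mem ha (W.smul_mem t (W.sub_mem hb ha))
    have hzero : MvPolynomial.eval₂ Polynomial.C
          (fun i => Polynomial.C (a i) + Polynomial.X * Polynomial.C (b i - a i)) f *
        MvPolynomial.eval₂ Polynomial.C
          (fun i => Polynomial.C (a i) + Polynomial.X * Polynomial.C (b i - a i)) g = 0 := by
      rw [← MvPolynomial.eval₂_mul]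
      apply Polynomial.zero_of_eval_zero
      intro t
      rw [aux_line_eval]
      exact (mem_vanishingIdeal_iff).1 hfg _ (hline t)
    rcases mul_eq_zero.1 hzero with h | h
    · have h0 := aux_line_eval a b 0 f
      rw [h] at h0
      simp at h0
      exact haf h0.symm
    · have h1 := aux_line_eval a b 1 g
      rw [h] at h1
      simp at h1
      exact hbg h1.symm

/-- A strictly increasing chain of primes over `I` bounds the Krull dimension of `R ⧸ I`
from below. -/
lemma aux_chain_le {R : Type*} [CommRing R] (I : Ideal R) {m : ℕ} (p : Fin (m + 1) → Ideal R)
    (hp : ∀ i, (p i).IsPrime) (hmono : StrictMono p) (hI : I ≤ p 0) :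
    (m : WithBot ℕ∞) ≤ ringKrullDim (R ⧸ I) := by
  have hle : ∀ i, I ≤ p i := fun i => hI.trans (hmono.monotone (Fin.zero_le i))
  have surj : Function.Surjective (Ideal.Quotient.mk I) := Ideal.Quotient.mk_surjective
  have hker : ∀ i, RingHom.ker (Ideal.Quotient.mk I) ≤ p i := by
    intro i; rw [Ideal.mk_ker]; exact hle i
  have hq : ∀ i, ((p i).map (Ideal.Quotient.mk I)).IsPrime := fun i =>
    haveI := hp i
    Ideal.map_isPrime_of_surjective surj (hker i)
  have hcomap : ∀ i, ((p i).map (Ideal.Quotient.mk I)).comap (Ideal.Quotient.mk I) = p i := by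
    intro i
    rw [Ideal.comap_map_of_surjective _ surj, ← RingHom.ker_eq_comap_bot, Ideal.mk_ker,
      sup_eq_left]
    exact hle i
  have hqmono : StrictMono (fun i => (p i).map (Ideal.Quotient.mk I)) := by
    intro i j hij
    refine lt_of_le_of_ne (Ideal.map_mono (hmono.monotone hij.le)) ?_
    intro he
    have := congrArg (Ideal.comap (Ideal.Quotient.mk I)) he
    rw [hcomap, hcomap] at this
    exact (hmono hij).ne this
  let s : LTSeries (PrimeSpectrum (R ⧸ I)) :=
    ⟨m, fun i => ⟨(p i).map (Ideal.Quotient.mk I), hq i⟩, fun i => by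
      show (_ : PrimeSpectrum (R ⧸ I)) < _; rw [← PrimeSpectrum.asIdeal_lt_asIdeal]
      exact hqmono (Fin.castSucc_lt_succ (i := i))⟩
  exact Order.LTSeries.length_le_krullDim s

/-- A full flag inside a submodule. -/
lemma aux_flag {K V : Type*} [Field K] [AddCommGroup V] [Module K V] [FiniteDimensional K V]
    (W : Submodule K V) :
    ∃ c : Fin (Module.finrank K W + 1) → Submodule K V,
      StrictMono c ∧ c 0 = ⊥ ∧ c (Fin.last _) = W := by
  set d := Module.finrank K W with hd
  let b : Module.Basis (Fin d) K W := Module.finBasis K W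
  let v : Fin d → V := fun i => (b i : V)
  have hvli : LinearIndependent K v :=
    b.linearIndependent.map' W.subtype (Submodule.ker_subtype W)
  refine ⟨fun i => Submodule.span K (v '' {j : Fin d | (j : ℕ) < (i : ℕ)}), ?_, ?_, ?_⟩
  · intro i j hij
    refine lt_of_le_of_ne (Submodule.span_mono (Set.image_mono ?_)) ?_
    · intro k hk; exact lt_of_lt_of_le hk (Nat.le_of_lt hij)
    · have hiltd : (i : ℕ) < d := lt_of_lt_of_le hij (Nat.lt_succ_iff.1 j.isLt)
      set k : Fin d := ⟨(i : ℕ), hiltd⟩ with hk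
      have hmem : v k ∈ Submodule.span K (v '' {j' : Fin d | (j' : ℕ) < (j : ℕ)}) :=
        Submodule.subset_span ⟨k, by simpa [hk] using hij, rfl⟩
      have hnmem : v k ∉ Submodule.span K (v '' {j' : Fin d | (j' : ℕ) < (i : ℕ)}) :=
        hvli.notMem_span_image (by simp [hk])
      intro he
      apply hnmem
      have heq : Submodule.span K (v '' {j' : Fin d | (j' : ℕ) < (i : ℕ)})
          = Submodule.span K (v '' {j' : Fin d | (j' : ℕ) < (j : ℕ)}) := he
      rw [heq]
      exact hmem
  · convert Submodule.span_empty
    convert Set.image_empty v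
    ext j; simp
  · show Submodule.span K (v '' {j : Fin d | (j : ℕ) < ((Fin.last d : Fin (d + 1)) : ℕ)}) = W
    have huniv : {j : Fin d | (j : ℕ) < ((Fin.last d : Fin (d + 1)) : ℕ)} = Set.univ := by
      ext j; simp [Fin.last, j.isLt]
    rw [huniv, Set.image_univ]
    have hrange : Set.range v = W.subtype '' Set.range b := by
      rw [← Set.range_comp]; rfl
    rw [hrange, Submodule.span_image, b.span_eq, Submodule.map_subtype_top]

/-- Evaluating a substituted polynomial. -/
lemma aux_subst_eval {m : ℕ} (x y : Fin m → ℂ) (s t : ℂ) (f : MvPolynomial (Fin m) ℂ) :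
    MvPolynomial.eval y (MvPolynomial.eval₂ MvPolynomial.C
        (fun i => MvPolynomial.C (s * x i) + MvPolynomial.C t * MvPolynomial.X i) f)
      = MvPolynomial.eval (s • x + t • y) f := by
  have : (MvPolynomial.eval y).comp
      (MvPolynomial.eval₂Hom (MvPolynomial.C : ℂ →+* MvPolynomial (Fin m) ℂ)
        (fun i => MvPolynomial.C (s * x i) + MvPolynomial.C t * MvPolynomial.X i))
      = MvPolynomial.eval (s • x + t • y) := by
    apply MvPolynomial.ringHom_ext <;> intro i <;> simp
  have h2 : MvPolynomial.eval y (MvPolynomial.eval₂ MvPolynomial.C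
      (fun i => MvPolynomial.C (s * x i) + MvPolynomial.C t * MvPolynomial.X i) f)
      = ((MvPolynomial.eval y).comp
        (MvPolynomial.eval₂Hom (MvPolynomial.C : ℂ →+* MvPolynomial (Fin m) ℂ)
          (fun i => MvPolynomial.C (s * x i) + MvPolynomial.C t * MvPolynomial.X i))) f := rfl
  rw [h2, this]

theorem stmt_9 (n : ℕ) (C : Set (Fin (n + 1) → ℂ))
    (I : Ideal (MvPolynomial (Fin (n + 1)) ℂ)) (hprime : I.IsPrime)
    (hzero : C = {x : Fin (n + 1) → ℂ | ∀ f ∈ I, MvPolynomial.eval x f = 0})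
    (hdim : ringKrullDim (MvPolynomial (Fin (n + 1)) ℂ ⧸ I) = 3)
    (hcone : ∀ (c : ℂ), ∀ x ∈ C, c • x ∈ C)
    (hlines : ∀ x ∈ C, x ≠ 0 →
      {W : Submodule ℂ (Fin (n + 1) → ℂ) |
        Module.finrank ℂ W = 2 ∧ x ∈ W ∧ (W : Set (Fin (n + 1) → ℂ)) ⊆ C}.Infinite) :
    ∃ π : Submodule ℂ (Fin (n + 1) → ℂ), Module.finrank ℂ π = 3 ∧
      C = (π : Set (Fin (n + 1) → ℂ)) := by
  classical
  haveI := hprime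
  have hC : C = MvPolynomial.zeroLocus ℂ I := hzero
  have hvidC : MvPolynomial.vanishingIdeal ℂ C = I := by
    rw [hC]; exact MvPolynomial.IsPrime.vanishingIdeal_zeroLocus I
  -- C is nonempty, hence contains 0
  have hCne : C.Nonempty := by
    by_contra h
    rw [Set.not_nonempty_iff_eq_empty] at h
    rw [h, MvPolynomial.vanishingIdeal_empty] at hvidC
    exact hprime.ne_top hvidC.symm
  obtain ⟨x₀, hx₀⟩ := hCne
  have h0C : (0 : Fin (n + 1) → ℂ) ∈ C := by
    simpa using hcone 0 x₀ hx₀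
  -- Key step: the cone is linear in each direction
  have key : ∀ x ∈ C, x ≠ 0 → ∀ y ∈ C, ∀ s t : ℂ, s • x + t • y ∈ C := by
    intro x hx hx0
    set S : Set (MvPolynomial (Fin (n + 1)) ℂ) :=
      {g | ∃ f ∈ I, ∃ s t : ℂ, g = MvPolynomial.eval₂ MvPolynomial.C
        (fun i => MvPolynomial.C (s * x i) + MvPolynomial.C t * MvPolynomial.X i) f} with hS
    set Z := MvPolynomial.zeroLocus ℂ (Ideal.span S) with hZ
    have hZmem : ∀ y, y ∈ Z ↔ ∀ s t : ℂ, s • x + t • y ∈ C := by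
      intro y
      rw [hZ, MvPolynomial.zeroLocus_span]
      constructor
      · intro h s t
        rw [hC]
        intro f hf
        have := h _ ⟨f, hf, s, t, rfl⟩
        change MvPolynomial.eval y _ = 0 at this; rwa [aux_subst_eval] at this
      · rintro h g ⟨f, hf, s, t, rfl⟩
        change MvPolynomial.eval y _ = 0; rw [aux_subst_eval]
        have hmem := h s t
        rw [hC] at hmem
        exact hmem f hf
    have hZC : Z ⊆ C := by
      intro y hy
      have := (hZmem y).1 hy 0 1
      simpa using this
    set J := MvPolynomial.vanishingIdeal ℂ Z with hJdef
    have hIJ : I ≤ J := by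
      rw [← hvidC]
      exact MvPolynomial.vanishingIdeal_anti_mono hZC
    have hzlJ : MvPolynomial.zeroLocus ℂ J = Z := by
      refine le_antisymm ?_ (MvPolynomial.zeroLocus_vanishingIdeal_le Z)
      rw [hZ]
      exact MvPolynomial.zeroLocus_anti_mono (MvPolynomial.le_vanishingIdeal_zeroLocus _)
    have hJI : J = I := by
      by_contra hne
      -- every plane through x contained in C gives a minimal prime over J
      have hmin : ∀ W : Submodule ℂ (Fin (n + 1) → ℂ), Module.finrank ℂ W = 2 → x ∈ W →
          (W : Set (Fin (n + 1) → ℂ)) ⊆ C →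
          MvPolynomial.vanishingIdeal ℂ (W : Set (Fin (n + 1) → ℂ)) ∈ J.minimalPrimes := by
        intro W hW2 hxW hWC
        have hWZ : (W : Set (Fin (n + 1) → ℂ)) ⊆ Z := by
          intro y hyW
          exact (hZmem y).2 (fun s t => hWC (W.add_mem (W.smul_mem s hxW) (W.smul_mem t hyW)))
        have hJW : J ≤ MvPolynomial.vanishingIdeal ℂ (W : Set (Fin (n + 1) → ℂ)) :=
          MvPolynomial.vanishingIdeal_anti_mono hWZ
        refine ⟨⟨aux_vid_prime W, hJW⟩, ?_⟩
        rintro q ⟨hqprime, hJq⟩ hqle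
        by_contra hnle
        have hqlt : q < MvPolynomial.vanishingIdeal ℂ (W : Set (Fin (n + 1) → ℂ)) :=
          lt_of_le_of_ne hqle (by rintro rfl; exact hnle le_rfl)
        obtain ⟨w, hwW, hw0⟩ := (Submodule.ne_bot_iff W).1 (by
          intro hbot
          rw [hbot, finrank_bot ℂ (Fin (n + 1) → ℂ)] at hW2
          exact two_ne_zero hW2.symm)
        have hL : (Submodule.span ℂ {w} : Submodule ℂ (Fin (n + 1) → ℂ)) < W := by
          refine lt_of_le_of_ne (Submodule.span_le.2 (Set.singleton_subset_iff.2 hwW)) ?_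
          intro h
          rw [← h, finrank_span_singleton hw0] at hW2
          omega
        have hbotL : (⊥ : Submodule ℂ (Fin (n + 1) → ℂ)) < Submodule.span ℂ {w} := by
          refine lt_of_le_of_ne bot_le ?_
          intro h
          exact hw0 ((Submodule.span_singleton_eq_bot).1 h.symm)
        have hIq : I < q := by
          refine lt_of_le_of_ne (hIJ.trans hJq) ?_
          rintro rfl
          exact hne (le_antisymm hJq hIJ)
        -- build a chain of five primes containing I
        set p : Fin 5 → Ideal (MvPolynomial (Fin (n + 1)) ℂ) :=
          ![I, q, MvPolynomial.vanishingIdeal ℂ (W : Set (Fin (n + 1) → ℂ)),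
            MvPolynomial.vanishingIdeal ℂ ((Submodule.span ℂ {w} : Submodule ℂ _) :
              Set (Fin (n + 1) → ℂ)),
            MvPolynomial.vanishingIdeal ℂ (((⊥ : Submodule ℂ (Fin (n + 1) → ℂ)) :
              Submodule ℂ _) : Set (Fin (n + 1) → ℂ))] with hp
        have hpprime : ∀ i, (p i).IsPrime := by
          intro i
          fin_cases i
          · exact hprime
          · exact hqprime
          · exact aux_vid_prime W
          · exact aux_vid_prime _
          · exact aux_vid_prime _
        have hpmono : StrictMono p := by
          rw [Fin.strictMono_iff_lt_succ]
          intro i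
          fin_cases i
          · exact hIq
          · exact hqlt
          · exact aux_vid_lt hL
          · exact aux_vid_lt hbotL
        have hchain := aux_chain_le I p hpprime hpmono (by simp [hp])
        rw [hdim] at hchain
        norm_num at hchain
      -- finiteness of minimal primes
      have hfin : J.minimalPrimes.Finite := by
        rw [Ideal.minimalPrimes_eq_comap]
        exact (minimalPrimes.finite_of_isNoetherianRing _).image _
      have hinf := hlines x hx hx0
      have hinj : Set.InjOn (fun W : Submodule ℂ (Fin (n + 1) → ℂ) =>
          MvPolynomial.vanishingIdeal ℂ (W : Set (Fin (n + 1) → ℂ)))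
          {W : Submodule ℂ (Fin (n + 1) → ℂ) |
            Module.finrank ℂ W = 2 ∧ x ∈ W ∧ (W : Set (Fin (n + 1) → ℂ)) ⊆ C} := by
        intro W1 _ W2 _ he
        apply SetLike.ext'
        rw [← aux_zl_vid W1, ← aux_zl_vid W2]
        simp only at he
        rw [he]
      have himg : ((fun W : Submodule ℂ (Fin (n + 1) → ℂ) =>
          MvPolynomial.vanishingIdeal ℂ (W : Set (Fin (n + 1) → ℂ))) ''
          {W : Submodule ℂ (Fin (n + 1) → ℂ) |
            Module.finrank ℂ W = 2 ∧ x ∈ W ∧ (W : Set (Fin (n + 1) → ℂ)) ⊆ C}).Infinite :=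
        hinf.image hinj
      have hsub : ((fun W : Submodule ℂ (Fin (n + 1) → ℂ) =>
          MvPolynomial.vanishingIdeal ℂ (W : Set (Fin (n + 1) → ℂ))) ''
          {W : Submodule ℂ (Fin (n + 1) → ℂ) |
            Module.finrank ℂ W = 2 ∧ x ∈ W ∧ (W : Set (Fin (n + 1) → ℂ)) ⊆ C})
          ⊆ J.minimalPrimes := by
        rintro _ ⟨W, ⟨hW2, hxW, hWC⟩, rfl⟩
        exact hmin W hW2 hxW hWC
      exact hfin.not_infinite (himg.mono hsub)
    -- conclude: Z = C
    intro y hy s t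
    have hyZ : y ∈ Z := by
      rw [← hzlJ, hJI, ← hC]
      exact hy
    exact (hZmem y).1 hyZ s t
  -- C is a linear subspace
  have hadd : ∀ a ∈ C, ∀ b ∈ C, a + b ∈ C := by
    intro a ha b hb
    by_cases h0 : a = 0
    · simpa [h0] using hb
    · have := key a ha h0 b hb 1 1
      simpa using this
  let π : Submodule ℂ (Fin (n + 1) → ℂ) :=
    { carrier := C
      add_mem' := fun {a b} ha hb => hadd a ha b hb
      zero_mem' := h0C
      smul_mem' := fun c {x} hx => hcone c x hx }
  have hCπ : C = (π : Set (Fin (n + 1) → ℂ)) := rfl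
  refine ⟨π, ?_, hCπ⟩
  set d := Module.finrank ℂ π with hd
  have hvidπ : MvPolynomial.vanishingIdeal ℂ ((π : Submodule ℂ _) : Set (Fin (n + 1) → ℂ)) = I := by
    rw [← hCπ]; exact hvidC
  -- upper bound : d ≤ 3
  obtain ⟨c, hcmono, hc0, hclast⟩ := aux_flag π
  have hupper : (d : WithBot ℕ∞) ≤ 3 := by
    rw [← hdim]
    apply aux_chain_le I (fun i => MvPolynomial.vanishingIdeal ℂ
      ((c i.rev : Submodule ℂ _) : Set (Fin (n + 1) → ℂ)))
    · intro i; exact aux_vid_prime _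
    · intro i j hij
      exact aux_vid_lt (hcmono (Fin.rev_lt_rev.2 hij))
    · rw [Fin.rev_zero, hclast, hvidπ]
  have hd3 : d ≤ 3 := by exact_mod_cast hupper
  -- lower bound
  have hd0 : d ≠ 0 := by
    intro h
    have hπbot : π = ⊥ := by
      have : Module.finrank ℂ π = 0 := by rw [← hd, h]
      exact Submodule.finrank_eq_zero.1 this
    have hC0 : C = ({0} : Set (Fin (n + 1) → ℂ)) := by
      rw [hCπ, hπbot]
      simp
    have hImax : I.IsMaximal := by
      rw [← hvidC, hC0]
      infer_instance
    haveI := hImax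
    have : ringKrullDim (MvPolynomial (Fin (n + 1)) ℂ ⧸ I) = 0 := by
      letI : Field (MvPolynomial (Fin (n + 1)) ℂ ⧸ I) := Ideal.Quotient.field I
      exact ringKrullDim_eq_zero_of_field _
    rw [hdim] at this
    norm_num at this
  have hdge : ∃ x ∈ C, x ≠ 0 := by
    have hπne : π ≠ ⊥ := by
      intro h
      apply hd0
      rw [hd, h, finrank_bot ℂ (Fin (n + 1) → ℂ)]
    obtain ⟨x, hxπ, hx0⟩ := (Submodule.ne_bot_iff π).1 hπne
    exact ⟨x, hxπ, hx0⟩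
  obtain ⟨x, hxC, hx0⟩ := hdge
  have hinf := hlines x hxC hx0
  have hd1 : d ≠ 1 := by
    intro h
    obtain ⟨W, hW⟩ := hinf.nonempty
    obtain ⟨hW2, _, hWC⟩ := hW
    have hWπ : W ≤ π := by
      rw [← SetLike.coe_subset_coe]
      exact fun y hy => (hCπ ▸ hWC) hy
    have := Submodule.finrank_mono hWπ
    rw [hW2, ← hd, h] at this
    omega
  have hd2 : d ≠ 2 := by
    intro h
    have hsub : {W : Submodule ℂ (Fin (n + 1) → ℂ) |
        Module.finrank ℂ W = 2 ∧ x ∈ W ∧ (W : Set (Fin (n + 1) → ℂ)) ⊆ C} ⊆ {π} := by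
      rintro W ⟨hW2, _, hWC⟩
      have hWπ : W ≤ π := by
        rw [← SetLike.coe_subset_coe]
        exact fun y hy => (hCπ ▸ hWC) hy
      have : W = π := Submodule.eq_of_le_of_finrank_eq hWπ (by rw [hW2, ← hd, h])
      simpa using this
    exact (((Set.finite_singleton π).subset hsub)).not_infinite hinf
  omega
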